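/- Assume a ≠ 1, let θ > 0 with θ ≠ 1 and θ ≠ −ln b/ln a, and let I₀(y) = y^{−θ} for y > 0. Set δ = (1+b)/(c^{θ}·(a^{−θ} + b)). Then I₁(y) = δ·y^{−θ} is an inverse marginal function satisfying the functional equation I₁(a·y) + b·I₁(y) = (1+b)·I₀(c·y) for all y > 0, and it is the unique inverse marginal function doing so: any inverse marginal function Ĩ satisfying Ĩ(a·y) + b·Ĩ(y) = (1+b)·I₀(c·y) for all y > 0 coincides with I₁ on (0,∞). -/

import Mathlib

open Set Filter

noncomputable section

/-- A utility function: `C²` on `(0,∞)`, strictly increasing and strictly concave there,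
satisfying the Inada conditions. -/
def IsUtility (U : ℝ → ℝ) : Prop :=
  ContDiffOn ℝ 2 U (Set.Ioi 0) ∧
  (∀ x > 0, 0 < deriv U x) ∧
  (∀ x > 0, deriv (deriv U) x < 0) ∧
  Tendsto (deriv U) (nhdsWithin 0 (Set.Ioi 0)) atTop ∧
  Tendsto (deriv U) atTop (nhds 0)

/-- An inverse marginal function: positive, `C¹` on `(0,∞)`, strictly decreasing derivative,
with `I(∞)=0` and `I(0+)=∞`. -/
def IsInvMarginal (I : ℝ → ℝ) : Prop :=
  (∀ y > 0, 0 < I y) ∧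
  ContDiffOn ℝ 1 I (Set.Ioi 0) ∧
  (∀ y > 0, deriv I y < 0) ∧
  Tendsto I atTop (nhds 0) ∧
  Tendsto I (nhdsWithin 0 (Set.Ioi 0)) atTop

/-- `I` is the inverse of the marginal `U'` on the positive reals: `I = (U')⁻¹`. -/
def InvMarginalOf (I U : ℝ → ℝ) : Prop :=
  (∀ x > 0, I (deriv U x) = x) ∧ (∀ y > 0, 0 < I y ∧ deriv U (I y) = y)

/-- `J` is the inverse function of `I` on the positive reals. -/
def IsInverseOf (J I : ℝ → ℝ) : Prop :=
  (∀ y > 0, J (I y) = y) ∧ (∀ x > 0, 0 < J x ∧ I (J x) = x)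

/-- The single-period inverse investment problem:
`U₀(x) = sup {p·U₁(x+π(u−1)) + (1−p)·U₁(x+π(d−1)) : −x/(u−1) ≤ π ≤ x/(1−d)}` for all `x > 0`. -/
def SPIIP (u d p : ℝ) (U₀ U₁ : ℝ → ℝ) : Prop :=
  ∀ x > 0, U₀ x =
    sSup ((fun pi => p * U₁ (x + pi * (u - 1)) + (1 - p) * U₁ (x + pi * (d - 1))) ''
      Set.Icc (-(x / (u - 1))) (x / (1 - d)))

/-!
The difference `h y = y ^ θ * Ĩ y - δ` satisfies `h (a * y) = -(r * h y)` with `r = b * a ^ θ`.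
Comparing the decreasing function `Ĩ` at `y` and `a * y` inside the functional equation bounds `h`
on one side, and the scaling relation then bounds it on both sides. Iterating `y ↦ a * y` (or
`y ↦ a⁻¹ * y`) multiplies `|h|` by `r ^ n` with `r > 1` (resp. `r⁻¹ > 1`); a bounded function can
only survive this if it vanishes. The condition `θ ≠ -(log b / log a)` is exactly `r ≠ 1`.
-/

theorem eq_zero_of_abs_comp_mul_eq_mul_of_bounded {h : ℝ → ℝ} {a r K : ℝ} (ha : 0 < a)
    (hr : 1 < r) (hK : ∀ y > 0, |h y| ≤ K) (hh : ∀ y > 0, |h (a * y)| = r * |h y|)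
    {y : ℝ} (hy : 0 < y) : h y = 0 := by
  have hiter : ∀ n : ℕ, |h (a ^ n * y)| = r ^ n * |h y| := by
    intro n
    induction n with
    | zero => simp
    | succ n ih =>
      rw [pow_succ', mul_assoc, hh _ (by positivity), ih, pow_succ', mul_assoc]
  by_contra hne
  have hgrow : Tendsto (fun n : ℕ => r ^ n * |h y|) atTop atTop :=
    (tendsto_pow_atTop_atTop_of_one_lt hr).atTop_mul_const (abs_pos.2 hne)
  obtain ⟨n, hn⟩ := (hgrow.eventually_gt_atTop K).exists
  linarith [hK _ (by positivity : 0 < a ^ n * y), hiter n]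

theorem eq_zero_of_comp_mul_eq_neg_mul_of_le {h : ℝ → ℝ} {a r C : ℝ} (ha : 0 < a) (hr0 : 0 < r)
    (hr1 : r ≠ 1) (hC : ∀ y > 0, h y ≤ C) (hh : ∀ y > 0, h (a * y) = -(r * h y))
    {y : ℝ} (hy : 0 < y) : h y = 0 := by
  have hbound : ∀ z > 0, |h z| ≤ max C (C / r) := by
    intro z hz
    have hlower : -(C / r) ≤ h z := by
      rw [neg_le, le_div_iff₀ hr0]
      linarith [hC _ (mul_pos ha hz), hh z hz]
    exact abs_le.2 ⟨by linarith [le_max_right C (C / r)], (hC z hz).trans (le_max_left _ _)⟩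
  have habs : ∀ z > 0, |h (a * z)| = r * |h z| := fun z hz => by
    rw [hh z hz, abs_neg, abs_mul, abs_of_pos hr0]
  rcases hr1.lt_or_gt with hlt | hgt
  · refine eq_zero_of_abs_comp_mul_eq_mul_of_bounded (inv_pos.2 ha) (one_lt_inv₀ hr0 |>.2 hlt)
      hbound (fun z hz => ?_) hy
    have := habs (a⁻¹ * z) (by positivity)
    rw [← mul_assoc, mul_inv_cancel₀ ha.ne', one_mul] at this
    rw [this, inv_mul_cancel_left₀ hr0.ne']
  · exact eq_zero_of_abs_comp_mul_eq_mul_of_bounded ha hgt hbound habs hy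

theorem IsInvMarginal.strictAntiOn {I : ℝ → ℝ} (hI : IsInvMarginal I) :
    StrictAntiOn I (Ioi 0) :=
  strictAntiOn_of_deriv_neg (convex_Ioi 0) hI.2.1.continuousOn
    (by rw [interior_Ioi]; exact hI.2.2.1)

theorem isInvMarginal_const_mul_rpow_neg {δ θ : ℝ} (hδ : 0 < δ) (hθ : 0 < θ) :
    IsInvMarginal (fun y => δ * y ^ (-θ)) := by
  refine ⟨fun y hy => by positivity, ?_, fun y hy => ?_, ?_, ?_⟩
  · exact contDiffOn_const.mul
      fun y hy => (Real.contDiffAt_rpow_const_of_ne (ne_of_gt hy)).contDiffWithinAt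
  · rw [((Real.hasDerivAt_rpow_const (Or.inl hy.ne')).const_mul δ).deriv]
    have : 0 < δ * (θ * y ^ (-θ - 1)) := by positivity
    linarith
  · simpa using (tendsto_rpow_neg_atTop hθ).const_mul δ
  · exact (tendsto_rpow_neg_nhdsGT_zero (neg_lt_zero.2 hθ)).const_mul_atTop hδ

section FunctionalEquation

variable {I : ℝ → ℝ} {a b δ θ : ℝ}

theorem const_mul_rpow_neg_comp_mul_add {c : ℝ} (ha : 0 < a) (hb : 0 < b) (hc : 0 < c)
    (hδ : δ = (1 + b) / (c ^ θ * (a ^ (-θ) + b))) {y : ℝ} (hy : 0 < y) :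
    δ * (a * y) ^ (-θ) + b * (δ * y ^ (-θ)) = (1 + b) * (c * y) ^ (-θ) := by
  have : 0 < a ^ (-θ) := by positivity
  rw [Real.mul_rpow ha.le hy.le, Real.mul_rpow hc.le hy.le, hδ, Real.rpow_neg hc.le]
  field_simp

variable (hI : ∀ y > 0, I (a * y) + b * I y = δ * (a * y) ^ (-θ) + b * (δ * y ^ (-θ)))
include hI

theorem rpow_mul_comp_mul_sub_eq (ha : 0 < a) {y : ℝ} (hy : 0 < y) :
    (a * y) ^ θ * I (a * y) - δ = -(b * a ^ θ * (y ^ θ * I y - δ)) := by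
  have hIay : I (a * y) = δ * (a * y) ^ (-θ) + b * (δ * y ^ (-θ)) - b * I y := by
    linarith [hI y hy]
  have : 0 < a ^ θ := by positivity
  have : 0 < y ^ θ := by positivity
  rw [hIay, Real.mul_rpow ha.le hy.le, Real.mul_rpow ha.le hy.le, Real.rpow_neg ha.le,
    Real.rpow_neg hy.le]
  field_simp
  ring

theorem rpow_mul_le_of_antitoneOn (ha0 : 0 < a) (ha1 : a < 1) (hb : 0 < b)
    (hanti : AntitoneOn I (Ioi 0)) {y : ℝ} (hy : 0 < y) :
    y ^ θ * I y ≤ δ * (a ^ (-θ) + b) / (1 + b) := by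
  have hmono : I y ≤ I (a * y) :=
    hanti (mul_pos ha0 hy) hy (mul_le_of_le_one_left hy.le ha1.le)
  have hyθ : 0 < y ^ θ := by positivity
  rw [le_div_iff₀ (by linarith), mul_comm (y ^ θ * I y), ← mul_assoc]
  calc (1 + b) * y ^ θ * I y = y ^ θ * (I y + b * I y) := by ring
    _ ≤ y ^ θ * (I (a * y) + b * I y) := by gcongr
    _ = δ * (a ^ (-θ) + b) := by
      rw [hI y hy, Real.mul_rpow ha0.le hy.le, Real.rpow_neg hy.le]
      field_simp

theorem le_rpow_mul_of_antitoneOn (ha : 1 < a) (hb : 0 < b)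
    (hanti : AntitoneOn I (Ioi 0)) {y : ℝ} (hy : 0 < y) :
    δ * (a ^ (-θ) + b) / (1 + b) ≤ y ^ θ * I y := by
  have ha0 : 0 < a := by linarith
  have hmono : I (a * y) ≤ I y :=
    hanti hy (mul_pos ha0 hy) (le_mul_of_one_le_left hy.le ha.le)
  have hyθ : 0 < y ^ θ := by positivity
  rw [div_le_iff₀ (by linarith), mul_comm (y ^ θ * I y), ← mul_assoc]
  calc δ * (a ^ (-θ) + b) = y ^ θ * (I (a * y) + b * I y) := by
        rw [hI y hy, Real.mul_rpow ha0.le hy.le, Real.rpow_neg hy.le]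
        field_simp
    _ ≤ y ^ θ * (I y + b * I y) := by gcongr
    _ = (1 + b) * y ^ θ * I y := by ring

theorem eq_const_mul_rpow_neg_of_antitoneOn (ha0 : 0 < a) (ha1 : a ≠ 1) (hb : 0 < b)
    (hr : b * a ^ θ ≠ 1) (hanti : AntitoneOn I (Ioi 0)) {y : ℝ} (hy : 0 < y) :
    I y = δ * y ^ (-θ) := by
  have hr0 : 0 < b * a ^ θ := by positivity
  have hzero : y ^ θ * I y - δ = 0 := by
    rcases ha1.lt_or_gt with hlt | hgt
    · exact eq_zero_of_comp_mul_eq_neg_mul_of_le (h := fun y => y ^ θ * I y - δ) ha0 hr0 hr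
        (fun y hy => sub_le_sub_right (rpow_mul_le_of_antitoneOn hI ha0 hlt hb hanti hy) δ)
        (fun y hy => rpow_mul_comp_mul_sub_eq hI ha0 hy) hy
    · refine neg_eq_zero.1 <| eq_zero_of_comp_mul_eq_neg_mul_of_le
        (h := fun y => -(y ^ θ * I y - δ)) ha0 hr0 hr
        (fun y hy => neg_le_neg (sub_le_sub_right (le_rpow_mul_of_antitoneOn hI hgt hb hanti hy) δ))
        (fun y hy => by simp only [rpow_mul_comp_mul_sub_eq hI ha0 hy, mul_neg]) hy
  have hyθ : 0 < y ^ θ := by positivity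
  rw [Real.rpow_neg hy.le, ← div_eq_mul_inv, eq_div_iff hyθ.ne']
  linear_combination hzero

end FunctionalEquation

theorem mul_rpow_ne_one_of_ne_neg_log_div_log {a b θ : ℝ} (ha0 : 0 < a) (ha1 : a ≠ 1)
    (hb : 0 < b) (hθ : θ ≠ -(Real.log b / Real.log a)) : b * a ^ θ ≠ 1 := by
  have hloga : Real.log a ≠ 0 := Real.log_ne_zero_of_pos_of_ne_one ha0 ha1
  intro h
  have hlog := congrArg Real.log h
  rw [Real.log_mul hb.ne' (by positivity), Real.log_rpow ha0, Real.log_one] at hlog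
  exact hθ (by field_simp; linarith)

theorem stmt17_general
    (u d p q a b c θ δ : ℝ)
    (hu : 1 < u) (hd1 : d < 1) (hp0 : 0 < p) (hp1 : p < 1)
    (hq : q = (1 - d) / (u - d)) (ha : a = ((1 - p) * q) / (p * (1 - q)))
    (hb : b = (1 - q) / q) (hc : c = (1 - p) / (1 - q))
    (ha1 : a ≠ 1)
    (hθ0 : 0 < θ) (hθ2 : θ ≠ -(Real.log b / Real.log a))
    (hδ : δ = (1 + b) / (c ^ θ * (a ^ (-θ) + b))) :
    IsInvMarginal (fun y => δ * y ^ (-θ)) ∧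
    (∀ y > 0, δ * (a * y) ^ (-θ) + b * (δ * y ^ (-θ)) = (1 + b) * (c * y) ^ (-θ)) ∧
    (∀ Itil : ℝ → ℝ, IsInvMarginal Itil →
      (∀ y > 0, Itil (a * y) + b * Itil y = (1 + b) * (c * y) ^ (-θ)) →
      ∀ y > 0, Itil y = δ * y ^ (-θ)) := by
  have hq0 : 0 < q := by rw [hq]; exact div_pos (by linarith) (by linarith)
  have hq1 : q < 1 := by rw [hq, div_lt_one (by linarith)]; linarith
  have hq1' : 0 < 1 - q := by linarith
  have hp1' : 0 < 1 - p := by linarith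
  have ha0 : 0 < a := by rw [ha]; positivity
  have hb0 : 0 < b := by rw [hb]; positivity
  have hc0 : 0 < c := by rw [hc]; positivity
  have hδ0 : 0 < δ := by rw [hδ]; positivity
  have hfeq := fun y (hy : 0 < y) => const_mul_rpow_neg_comp_mul_add ha0 hb0 hc0 hδ hy
  refine ⟨isInvMarginal_const_mul_rpow_neg hδ0 hθ0, hfeq, fun Itil hItil hItil_eq y hy => ?_⟩
  exact eq_const_mul_rpow_neg_of_antitoneOn (fun y hy => (hItil_eq y hy).trans (hfeq y hy).symm)
    ha0 ha1 hb0 (mul_rpow_ne_one_of_ne_neg_log_div_log ha0 ha1 hb0 hθ2)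
    hItil.strictAntiOn.antitoneOn hy

/-- For the power initial datum `I₀(y) = y^{−θ}` (with `θ > 0`, `θ ≠ 1`,
`θ ≠ −log_a b`) and `δ = (1+b)/(c^θ·(a^{−θ}+b))`, the function `I₁(y) = δ·y^{−θ}` is an inverse
marginal function solving the functional equation, and it is the unique inverse marginal
function doing so. -/
theorem stmt17
    (u d p q a b c θ δ : ℝ)
    (hu : 1 < u) (hd0 : 0 < d) (hd1 : d < 1) (hp0 : 0 < p) (hp1 : p < 1)
    (hq : q = (1 - d) / (u - d)) (ha : a = ((1 - p) * q) / (p * (1 - q)))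
    (hb : b = (1 - q) / q) (hc : c = (1 - p) / (1 - q))
    (ha1 : a ≠ 1)
    (hθ0 : 0 < θ) (hθ1 : θ ≠ 1) (hθ2 : θ ≠ -(Real.log b / Real.log a))
    (hδ : δ = (1 + b) / (c ^ θ * (a ^ (-θ) + b))) :
    IsInvMarginal (fun y => δ * y ^ (-θ)) ∧
    (∀ y > 0, δ * (a * y) ^ (-θ) + b * (δ * y ^ (-θ)) = (1 + b) * (c * y) ^ (-θ)) ∧
    (∀ Itil : ℝ → ℝ, IsInvMarginal Itil →
      (∀ y > 0, Itil (a * y) + b * Itil y = (1 + b) * (c * y) ^ (-θ)) →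
      ∀ y > 0, Itil y = δ * y ^ (-θ)) :=
  stmt17_general u d p q a b c θ δ hu hd1 hp0 hp1 hq ha hb hc ha1 hθ0 hθ2 hδ
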